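/- Bridge operation, outcome (|0⟩−i|1⟩)/√2: with ι, Λ(Z)₁₂, Λ(Z)₂₃ as in the bridge operation and ⟨m′| the functional on the middle qubit given by ⟨m′|v⟩ = (⟨0|v⟩ + i⟨1|v⟩)/√2, for every |Ψ⟩ ∈ ℂ²⊗ℂ², (I⊗⟨m′|⊗I) Λ(Z)₁₂ Λ(Z)₂₃ ι(|Ψ⟩) = (e^{iπ/4}/√2) (S†⊗S†) Λ(Z) |Ψ⟩. Moreover, for every unit vector |Ψ⟩ ∈ ℂ²⊗ℂ², each of the two outcomes of this measurement of the middle qubit occurs with probability exactly 1/2. -/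

import Mathlib

/-!
After `ι` the middle qubit is `|+⟩`, and `Λ(Z)₁₂ Λ(Z)₂₃` leaves the component `|a,0,b⟩`
unchanged while multiplying `|a,1,b⟩` by `(-1)^(a+b)`. Contracting the middle qubit with
`⟨m′|` (resp. `⟨m|`) therefore multiplies each coefficient `Ψ(a,b)` by
`(1 ± i(-1)^(a+b))/2`. This diagonal operator is `e^{iπ/4}/√2 · (S†⊗S†) Λ(Z)`, and each of
its entries has squared modulus `1/2`, so both outcomes halve `‖Ψ‖²`.
-/

noncomputable section

/-- The map `ι : ℂ²⊗ℂ² → ℂ²⊗ℂ²⊗ℂ²` inserting `|+⟩` as the middle tensor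
factor: `ι(|u⟩⊗|w⟩) = |u⟩⊗|+⟩⊗|w⟩`. -/
def insertPlusMid (Ψ : Fin 2 × Fin 2 → ℂ) : Fin 2 × Fin 2 × Fin 2 → ℂ :=
  fun p => (Real.sqrt 2 : ℂ)⁻¹ * Ψ (p.1, p.2.2)

/-- The controlled-Z gate `Λ(Z)₁₂` between qubits 1 and 2 of three qubits. -/
def CZ12 (v : Fin 2 × Fin 2 × Fin 2 → ℂ) : Fin 2 × Fin 2 × Fin 2 → ℂ :=
  fun p => (if p.1 = 1 ∧ p.2.1 = 1 then (-1 : ℂ) else 1) * v p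

/-- The controlled-Z gate `Λ(Z)₂₃` between qubits 2 and 3 of three qubits. -/
def CZ23 (v : Fin 2 × Fin 2 × Fin 2 → ℂ) : Fin 2 × Fin 2 × Fin 2 → ℂ :=
  fun p => (if p.2.1 = 1 ∧ p.2.2 = 1 then (-1 : ℂ) else 1) * v p

/-- The partial contraction `(I⊗⟨m|⊗I)` against the middle qubit, where
`⟨m|v⟩ = (⟨0|v⟩ − i⟨1|v⟩)/√2`. -/
def braMmid (v : Fin 2 × Fin 2 × Fin 2 → ℂ) : EuclideanSpace ℂ (Fin 2 × Fin 2) :=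
  WithLp.toLp 2 (fun q : Fin 2 × Fin 2 => (Real.sqrt 2 : ℂ)⁻¹ * (v (q.1, 0, q.2) - Complex.I * v (q.1, 1, q.2)))

/-- The partial contraction `(I⊗⟨m′|⊗I)` against the middle qubit, where
`⟨m′|v⟩ = (⟨0|v⟩ + i⟨1|v⟩)/√2`. -/
def braM'mid (v : Fin 2 × Fin 2 × Fin 2 → ℂ) : EuclideanSpace ℂ (Fin 2 × Fin 2) :=
  WithLp.toLp 2 (fun q : Fin 2 × Fin 2 => (Real.sqrt 2 : ℂ)⁻¹ * (v (q.1, 0, q.2) + Complex.I * v (q.1, 1, q.2)))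

/-- The gate `S† ⊗ S†` on two qubits, where `S† = diag(1, −i)`. -/
def SdagSdag (w : Fin 2 × Fin 2 → ℂ) : Fin 2 × Fin 2 → ℂ :=
  fun q => (-Complex.I) ^ (q.1 : ℕ) * (-Complex.I) ^ (q.2 : ℕ) * w q

/-- The controlled-Z gate `Λ(Z)` on two qubits. -/
def CZ (w : Fin 2 × Fin 2 → ℂ) : Fin 2 × Fin 2 → ℂ :=
  fun q => (if q.1 = 1 ∧ q.2 = 1 then (-1 : ℂ) else 1) * w q

open Complex

lemma ofReal_sqrt_two_inv_mul_self : (Real.sqrt 2 : ℂ)⁻¹ * (Real.sqrt 2 : ℂ)⁻¹ = 1 / 2 := by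
  rw [← mul_inv, ← ofReal_mul, Real.mul_self_sqrt zero_le_two]
  norm_num

lemma exp_I_pi_div_four_mul_sqrt_two_inv :
    exp (I * Real.pi / 4) * (Real.sqrt 2 : ℂ)⁻¹ = (1 + I) / 2 := by
  have h : I * (Real.pi : ℂ) / 4 = ((Real.pi / 4 : ℝ) : ℂ) * I := by push_cast; ring
  rw [h, exp_mul_I, ← ofReal_cos, ← ofReal_sin, Real.cos_pi_div_four, Real.sin_pi_div_four]
  have hs : (Real.sqrt 2 : ℂ) * (Real.sqrt 2 : ℂ)⁻¹ = 1 :=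
    mul_inv_cancel₀ (ofReal_ne_zero.mpr (by positivity))
  push_cast
  linear_combination (1 + I) / 2 * hs

lemma CZ12_CZ23_apply_zero (v : Fin 2 × Fin 2 × Fin 2 → ℂ) (a b : Fin 2) :
    CZ12 (CZ23 v) (a, 0, b) = v (a, 0, b) := by
  simp [CZ12, CZ23]

lemma CZ12_CZ23_apply_one (v : Fin 2 × Fin 2 × Fin 2 → ℂ) (a b : Fin 2) :
    CZ12 (CZ23 v) (a, 1, b) = (-1) ^ ((a : ℕ) + b) * v (a, 1, b) := by
  fin_cases a <;> fin_cases b <;> simp [CZ12, CZ23]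

lemma braM'mid_bridge_apply (Ψ : Fin 2 × Fin 2 → ℂ) (q : Fin 2 × Fin 2) :
    braM'mid (CZ12 (CZ23 (insertPlusMid Ψ))) q = (1 + I * (-1) ^ ((q.1 : ℕ) + q.2)) / 2 * Ψ q := by
  simp only [braM'mid, CZ12_CZ23_apply_zero, CZ12_CZ23_apply_one, insertPlusMid]
  linear_combination (1 + I * (-1) ^ ((q.1 : ℕ) + q.2)) * Ψ q * ofReal_sqrt_two_inv_mul_self

lemma braMmid_bridge_apply (Ψ : Fin 2 × Fin 2 → ℂ) (q : Fin 2 × Fin 2) :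
    braMmid (CZ12 (CZ23 (insertPlusMid Ψ))) q = (1 - I * (-1) ^ ((q.1 : ℕ) + q.2)) / 2 * Ψ q := by
  simp only [braMmid, CZ12_CZ23_apply_zero, CZ12_CZ23_apply_one, insertPlusMid]
  linear_combination (1 - I * (-1) ^ ((q.1 : ℕ) + q.2)) * Ψ q * ofReal_sqrt_two_inv_mul_self

lemma one_add_I_mul_SdagSdag_CZ_phase (a b : Fin 2) :
    (1 + I) * ((-I) ^ (a : ℕ) * (-I) ^ (b : ℕ) * if a = 1 ∧ b = 1 then -1 else 1) =
      1 + I * (-1) ^ ((a : ℕ) + b) := by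
  fin_cases a <;> fin_cases b <;> simp <;> linear_combination -I_sq

lemma norm_sq_one_add_I_mul_neg_one_pow_div_two (n : ℕ) :
    ‖(1 + I * (-1) ^ n) / 2‖ ^ 2 = 1 / 2 := by
  rcases n.even_or_odd with hn | hn <;>
    simp [hn.neg_one_pow, div_pow, Complex.sq_norm, Complex.normSq_apply] <;> norm_num

lemma norm_sq_one_sub_I_mul_neg_one_pow_div_two (n : ℕ) :
    ‖(1 - I * (-1) ^ n) / 2‖ ^ 2 = 1 / 2 := by
  simpa [pow_succ, sub_eq_add_neg] using norm_sq_one_add_I_mul_neg_one_pow_div_two (n + 1)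

lemma EuclideanSpace.norm_sq_eq_mul_of_norm_sq_apply {𝕜 ι : Type*} [RCLike 𝕜] [Fintype ι]
    {v w : EuclideanSpace 𝕜 ι} (c : ℝ) (h : ∀ i, ‖v i‖ ^ 2 = c * ‖w i‖ ^ 2) :
    ‖v‖ ^ 2 = c * ‖w‖ ^ 2 := by
  simp only [EuclideanSpace.norm_sq_eq, h, Finset.mul_sum]

/-- Bridge operation, outcome `(|0⟩−i|1⟩)/√2`, together with the fact that
each of the two outcomes of the middle-qubit measurement occurs with
probability exactly `1/2` on every unit input vector. -/
theorem bridge_operation_outcome_one_and_probabilities :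
    (∀ Ψ : Fin 2 × Fin 2 → ℂ,
      braM'mid (CZ12 (CZ23 (insertPlusMid Ψ))) =
        (Complex.exp (Complex.I * Real.pi / 4) * (Real.sqrt 2 : ℂ)⁻¹) •
          SdagSdag (CZ Ψ)) ∧
    ∀ Ψ : EuclideanSpace ℂ (Fin 2 × Fin 2), ‖Ψ‖ = 1 →
      ‖braMmid (CZ12 (CZ23 (insertPlusMid Ψ)))‖ ^ 2 = 1 / 2 ∧
        ‖braM'mid (CZ12 (CZ23 (insertPlusMid Ψ)))‖ ^ 2 = 1 / 2 := by
  refine ⟨fun Ψ => funext fun q => ?_, fun Ψ hΨ => ⟨?_, ?_⟩⟩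
  · rw [braM'mid_bridge_apply, exp_I_pi_div_four_mul_sqrt_two_inv, Pi.smul_apply, smul_eq_mul,
      SdagSdag, CZ, ← one_add_I_mul_SdagSdag_CZ_phase]
    ring
  · rw [EuclideanSpace.norm_sq_eq_mul_of_norm_sq_apply (1 / 2) fun q => ?_, hΨ]
    · norm_num
    · rw [braMmid_bridge_apply, norm_mul, mul_pow, norm_sq_one_sub_I_mul_neg_one_pow_div_two]
  · rw [EuclideanSpace.norm_sq_eq_mul_of_norm_sq_apply (1 / 2) fun q => ?_, hΨ]
    · norm_num
    · rw [braM'mid_bridge_apply, norm_mul, mul_pow, norm_sq_one_add_I_mul_neg_one_pow_div_two]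

end
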